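/- arXiv:1008.2795 — 3 statements merged into one kernel-verified Lean document; each statement's English description precedes it below -/
import Mathlib

section
/- Let X and Y be proper geodesic metric spaces with basepoints x₀ and y₀, and let f : X → Y be a (λ, ε)-quasi-isometric embedding with f(x₀) = y₀. Then for every n ∈ ℕ there exists m ∈ ℕ such that for all x, x' ∈ X: if there is a continuous path from x to x' staying outside the closed ball B(x₀, m), then there is a continuous path from f(x) to f(x') staying outside B(y₀, n). -/
/-!
Points of `X` far from `x₀` are sent far from `y₀`, and points at distance `≤ 1` are sent
within `D = λ(1 + ε)` of each other. Cut a path outside `B(x₀, m)` into pieces of diameter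
`≤ 1` (uniform continuity on `[0, 1]`); the images of consecutive cut points lie outside
`B(y₀, n + D/2)` and are `D`-close, so a geodesic between them stays outside `B(y₀, n)`.
Concatenating these geodesics gives the required path.
-/

open Set Metric

section Paths

variable {Y : Type*} [TopologicalSpace Y] {F : Set Y}

theorem JoinedIn.exists_continuousOn_Icc {y y' : Y} (h : JoinedIn F y y') :
    ∃ β : ℝ → Y, ContinuousOn β (Icc 0 1) ∧ β 0 = y ∧ β 1 = y' ∧
      ∀ t ∈ Icc (0 : ℝ) 1, β t ∈ F := by
  obtain ⟨γ, hγ⟩ := h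
  refine ⟨γ.extend, γ.continuous_extend.continuousOn, γ.extend_zero, γ.extend_one, ?_⟩
  intro t ht
  rw [γ.extend_apply ht]
  exact hγ _

theorem JoinedIn.of_continuousOn_Icc {γ : ℝ → Y} {a b : ℝ} (hab : a ≤ b)
    (hγ : ContinuousOn γ (Icc a b)) (hF : MapsTo γ (Icc a b) F) : JoinedIn F (γ a) (γ b) := by
  have hmaps : MapsTo (fun t : ℝ => a + (b - a) * t) (Icc 0 1) (Icc a b) := by
    intro t ht
    constructor <;> nlinarith [ht.1, ht.2]
  exact JoinedIn.ofLine (f := γ ∘ fun t => a + (b - a) * t)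
    (hγ.comp (by fun_prop) hmaps) (by simp) (by simp) (hF.comp hmaps).image_subset

theorem joinedIn_of_forall_dist_lt {φ : ℝ → Y} {δ : ℝ} (hδ : 0 < δ)
    (h : ∀ s ∈ Icc (0 : ℝ) 1, ∀ t ∈ Icc (0 : ℝ) 1, dist s t < δ → JoinedIn F (φ s) (φ t)) :
    JoinedIn F (φ 0) (φ 1) := by
  obtain ⟨N, hN⟩ := exists_nat_gt (1 / δ)
  have hN0 : (0 : ℝ) < N := (one_div_pos.2 hδ).trans hN
  have hmem : ∀ k ≤ N, (k : ℝ) / N ∈ Icc (0 : ℝ) 1 := fun k hk =>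
    ⟨by positivity, (div_le_one hN0).2 (by exact_mod_cast hk)⟩
  have hstep : ∀ k : ℕ, dist ((k : ℝ) / N) (((k + 1 : ℕ) : ℝ) / N) < δ := by
    intro k
    rw [Real.dist_eq, Nat.cast_succ, ← sub_div, sub_add_cancel_left, abs_div, abs_neg,
      abs_one, abs_of_pos hN0]
    exact (one_div_lt hδ hN0).1 hN
  have hchain : ∀ k ≤ N, JoinedIn F (φ 0) (φ (k / N)) := by
    intro k
    induction k with
    | zero =>
      intro _
      have h01 : (0 : ℝ) ∈ Icc (0 : ℝ) 1 := left_mem_Icc.2 zero_le_one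
      simpa using h 0 h01 0 h01 (by simpa using hδ)
    | succ k ih =>
      intro hk
      exact (ih (by omega)).trans (h _ (hmem k (by omega)) _ (hmem (k + 1) hk) (hstep k))
  simpa [hN0.ne'] using hchain N le_rfl

end Paths

section Geodesics

variable {Y : Type*} [PseudoMetricSpace Y]

theorem joinedIn_compl_closedBall_of_isometric_segment {γ : ℝ → Y} {d r : ℝ} {y₀ : Y}
    (hd : 0 ≤ d) (hγ : ∀ s ∈ Icc 0 d, ∀ t ∈ Icc 0 d, dist (γ s) (γ t) = |s - t|)
    (h₀ : r + d / 2 < dist (γ 0) y₀) (h₁ : r + d / 2 < dist (γ d) y₀) :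
    JoinedIn (closedBall y₀ r)ᶜ (γ 0) (γ d) := by
  refine JoinedIn.of_continuousOn_Icc hd ?_ ?_
  · refine (LipschitzOnWith.of_dist_le_mul (K := 1) fun s hs t ht => ?_).continuousOn
    rw [hγ s hs t ht, Real.dist_eq]
    simp
  · intro s hs
    have h0s : dist (γ 0) (γ s) = s := by
      rw [hγ 0 ⟨le_rfl, hd⟩ s hs, zero_sub, abs_neg, abs_of_nonneg hs.1]
    have hds : dist (γ d) (γ s) = d - s := by
      rw [hγ d ⟨hd, le_rfl⟩ s hs, abs_of_nonneg (sub_nonneg.2 hs.2)]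
    -- `γ s` is within `s` of one endpoint and within `d - s` of the other: average the two bounds.
    have := dist_triangle (γ 0) (γ s) y₀
    have := dist_triangle (γ d) (γ s) y₀
    rw [mem_compl_iff, mem_closedBall, not_le]
    linarith

theorem joinedIn_compl_closedBall_of_geodesic
    (hgeo : ∀ x y : Y, ∃ α : ℝ → Y, α 0 = x ∧ α (dist x y) = y ∧
      ∀ s ∈ Icc (0 : ℝ) (dist x y), ∀ t ∈ Icc (0 : ℝ) (dist x y), dist (α s) (α t) = |s - t|)
    {y y' y₀ : Y} {r : ℝ} (h : r + dist y y' / 2 < dist y y₀)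
    (h' : r + dist y y' / 2 < dist y' y₀) : JoinedIn (closedBall y₀ r)ᶜ y y' := by
  obtain ⟨γ, hγ0, hγ1, hγ⟩ := hgeo y y'
  have := joinedIn_compl_closedBall_of_isometric_segment dist_nonneg hγ
    (by rwa [hγ0]) (by rwa [hγ1])
  rwa [hγ0, hγ1] at this

end Geodesics

theorem dist_map_le_mul_add {X Y : Type*} [PseudoMetricSpace X] [PseudoMetricSpace Y]
    {f : X → Y} {lam ε : ℝ} (hlam : 0 < lam)
    (hf : ∀ x x' : X, (1 / lam) * dist (f x) (f x') - ε ≤ dist x x') (x x' : X) :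
    dist (f x) (f x') ≤ lam * (dist x x' + ε) := by
  have := mul_le_mul_of_nonneg_left (hf x x') hlam.le
  rwa [mul_sub, ← mul_assoc, mul_one_div_cancel hlam.ne', one_mul, sub_le_iff_le_add,
    ← mul_add] at this

theorem stmt_4_general (X Y : Type*) [MetricSpace X] [MetricSpace Y]
    (hYgeo : ∀ x y : Y, ∃ α : ℝ → Y, α 0 = x ∧ α (dist x y) = y ∧
      ∀ s ∈ Set.Icc (0 : ℝ) (dist x y), ∀ t ∈ Set.Icc (0 : ℝ) (dist x y),
        dist (α s) (α t) = |s - t|)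
    (x₀ : X) (y₀ : Y) (f : X → Y) (lam ε : ℝ) (hlam : 1 ≤ lam)
    (hqi : ∀ x x' : X,
      (1 / lam) * dist (f x) (f x') - ε ≤ dist x x' ∧
        dist x x' ≤ lam * dist (f x) (f x') + ε)
    (hbase : f x₀ = y₀) :
    ∀ n : ℕ, ∃ m : ℕ, ∀ x x' : X,
      (∃ α : ℝ → X, ContinuousOn α (Set.Icc 0 1) ∧ α 0 = x ∧ α 1 = x' ∧
        ∀ t ∈ Set.Icc (0 : ℝ) 1, α t ∉ Metric.closedBall x₀ (m : ℝ)) →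
      (∃ β : ℝ → Y, ContinuousOn β (Set.Icc 0 1) ∧ β 0 = f x ∧ β 1 = f x' ∧
        ∀ t ∈ Set.Icc (0 : ℝ) 1, β t ∉ Metric.closedBall y₀ (n : ℝ)) := by
  intro n
  have hlam0 : 0 < lam := one_pos.trans_le hlam
  set D := lam * (1 + ε)
  obtain ⟨m, hm⟩ := exists_nat_gt (lam * (n + D / 2) + ε)
  refine ⟨m, ?_⟩
  rintro x x' ⟨α, hαc, rfl, rfl, hαm⟩
  have hfar : ∀ t ∈ Icc (0 : ℝ) 1, (n : ℝ) + D / 2 < dist (f (α t)) y₀ := by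
    intro t ht
    have hfar_X : (m : ℝ) < dist (α t) x₀ := not_le.1 (hαm t ht)
    have hlower := (hqi (α t) x₀).2
    rw [hbase] at hlower
    exact lt_of_mul_lt_mul_left (by linarith) hlam0.le
  obtain ⟨δ, hδ, hαδ⟩ := Metric.uniformContinuousOn_iff.1
    (isCompact_Icc.uniformContinuousOn_of_continuous hαc) 1 one_pos
  refine JoinedIn.exists_continuousOn_Icc <| joinedIn_of_forall_dist_lt
    (F := (closedBall y₀ n)ᶜ) (φ := f ∘ α) hδ fun s hs t ht hst => ?_
  change JoinedIn _ (f (α s)) (f (α t))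
  have hclose : dist (f (α s)) (f (α t)) ≤ D :=
    (dist_map_le_mul_add hlam0 (fun x x' => (hqi x x').1) _ _).trans
      (mul_le_mul_of_nonneg_left (by linarith [hαδ s hs t ht hst]) hlam0.le)
  exact joinedIn_compl_closedBall_of_geodesic hYgeo
    (by linarith [hfar s hs]) (by linarith [hfar t ht])

/-- Let `X, Y` be proper geodesic metric spaces with basepoints `x₀, y₀` and let
`f : X → Y` be a `(λ, ε)`-quasi-isometric embedding with `f x₀ = y₀`.  Then for every
`n` there is `m` such that any two points joined by a continuous path staying outside
the closed ball `B(x₀, m)` have images joined by a continuous path staying outside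
`B(y₀, n)`. -/
theorem stmt_4 (X Y : Type*) [MetricSpace X] [MetricSpace Y]
    (hXproper : ∀ (x : X) (R : ℝ), IsCompact (Metric.closedBall x R))
    (hYproper : ∀ (y : Y) (R : ℝ), IsCompact (Metric.closedBall y R))
    (hXgeo : ∀ x y : X, ∃ α : ℝ → X, α 0 = x ∧ α (dist x y) = y ∧
      ∀ s ∈ Set.Icc (0 : ℝ) (dist x y), ∀ t ∈ Set.Icc (0 : ℝ) (dist x y),
        dist (α s) (α t) = |s - t|)
    (hYgeo : ∀ x y : Y, ∃ α : ℝ → Y, α 0 = x ∧ α (dist x y) = y ∧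
      ∀ s ∈ Set.Icc (0 : ℝ) (dist x y), ∀ t ∈ Set.Icc (0 : ℝ) (dist x y),
        dist (α s) (α t) = |s - t|)
    (x₀ : X) (y₀ : Y) (f : X → Y) (lam ε : ℝ) (hlam : 1 ≤ lam) (hε : 0 < ε)
    (hqi : ∀ x x' : X,
      (1 / lam) * dist (f x) (f x') - ε ≤ dist x x' ∧
        dist x x' ≤ lam * dist (f x) (f x') + ε)
    (hbase : f x₀ = y₀) :
    ∀ n : ℕ, ∃ m : ℕ, ∀ x x' : X,
      (∃ α : ℝ → X, ContinuousOn α (Set.Icc 0 1) ∧ α 0 = x ∧ α 1 = x' ∧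
        ∀ t ∈ Set.Icc (0 : ℝ) 1, α t ∉ Metric.closedBall x₀ (m : ℝ)) →
      (∃ β : ℝ → Y, ContinuousOn β (Set.Icc 0 1) ∧ β 0 = f x ∧ β 1 = f x' ∧
        ∀ t ∈ Set.Icc (0 : ℝ) 1, β t ∉ Metric.closedBall y₀ (n : ℝ)) :=
  stmt_4_general X Y hYgeo x₀ y₀ f lam ε hlam hqi hbase
end

section
/- Let G be a group containing a subset V ⊆ G and an element g ∈ V such that gV ⊆ V, g⁻¹ ∉ V, the complement G \ V is infinite, both V \ gV and (G\V) \ g⁻¹(G\V) are finite, and both V and G \ V are almost invariant. Then g has infinite order and the cyclic subgroup ⟨g⟩ has finite index in G. -/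
/-!
Positive powers of `g` lie in `V` and negative ones outside it, so `g` has infinite order.
Almost invariance of `V` then forbids a whole backward orbit `g⁻ⁿx` from staying in `V`: it
would put all `g⁻ⁿ` in `V x⁻¹ \ V`. Hence the orbit of each `x ∈ V` leaves `V`, and the last
point before it does lies in the finite set `V \ gV`. The same argument for `(Vᶜ, g⁻¹)` sends
each `x ∉ V` into `Vᶜ \ g⁻¹Vᶜ`, so finitely many right cosets of `⟨g⟩` cover `G`.
-/

section

variable {G : Type*} [Group G]

theorem Subgroup.finiteIndex_of_forall_exists_mul_mem {H : Subgroup G} {F : Set G}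
    (hF : F.Finite) (hcover : ∀ x : G, ∃ h ∈ H, h * x ∈ F) : H.FiniteIndex := by
  have hsurj : Set.SurjOn (fun y : G => ((y⁻¹ : G) : G ⧸ H)) F Set.univ := by
    rintro q -
    obtain ⟨x, rfl⟩ := QuotientGroup.mk_surjective q
    obtain ⟨h, hh, hx⟩ := hcover x⁻¹
    refine ⟨h * x⁻¹, hx, QuotientGroup.eq.mpr ?_⟩
    simpa using hh
  have : Finite (G ⧸ H) := Set.finite_univ_iff.mp (hF.of_surjOn _ hsurj)
  exact H.finiteIndex_of_finite_quotient

variable {W : Set G} {h : G}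

theorem pow_succ_mem_of_mul_mem (hh : h ∈ W) (hstep : ∀ y ∈ W, h * y ∈ W) (n : ℕ) :
    h ^ (n + 1) ∈ W := by
  induction n with
  | zero => simpa using hh
  | succ n ih => rw [pow_succ']; exact hstep _ ih

theorem not_isOfFinOrder_of_pow_succ_mem (hin : ∀ n : ℕ, h ^ (n + 1) ∈ W)
    (hout : ∀ n : ℕ, (h ^ (n + 1))⁻¹ ∉ W) : ¬IsOfFinOrder h := by
  intro hfin
  obtain ⟨n, hn, hpow⟩ := isOfFinOrder_iff_pow_eq_one.mp hfin
  obtain ⟨m, rfl⟩ := Nat.exists_eq_add_one_of_ne_zero hn.ne'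
  have hone := hin m
  rw [hpow] at hone
  exact hout m (by rwa [hpow, inv_one])

theorem exists_inv_pow_mul_not_mem (hh : ¬IsOfFinOrder h)
    (hout : ∀ n : ℕ, (h ^ (n + 1))⁻¹ ∉ W) {x : G}
    (hfin : (symmDiff ((fun v => v * x⁻¹) '' W) W).Finite) :
    ∃ n : ℕ, (h ^ n)⁻¹ * x ∉ W := by
  by_contra! hall
  have hinj : Function.Injective fun n : ℕ => (h ^ (n + 1))⁻¹ :=
    inv_injective.comp ((injective_pow_iff_not_isOfFinOrder.mpr hh).comp Nat.succ_injective)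
  exact Set.infinite_of_injective_forall_mem hinj
    (fun n => Or.inl ⟨⟨_, hall (n + 1), by group⟩, hout n⟩) hfin

theorem exists_inv_pow_mul_mem_diff {x : G} (hx : x ∈ W)
    (hesc : ∃ n : ℕ, (h ^ n)⁻¹ * x ∉ W) :
    ∃ k : ℕ, (h ^ k)⁻¹ * x ∈ W \ (fun y => h * y) '' W := by
  by_contra! hcon
  obtain ⟨n, hn⟩ := hesc
  suffices ∀ k : ℕ, (h ^ k)⁻¹ * x ∈ W from hn (this n)
  intro k
  induction k with
  | zero => simpa using hx
  | succ k ih =>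
    obtain ⟨v, hv, hvk⟩ : (h ^ k)⁻¹ * x ∈ (fun y => h * y) '' W :=
      by_contra fun hv => hcon k ⟨ih, hv⟩
    have : (h ^ (k + 1))⁻¹ * x = v := by
      rw [pow_succ, mul_inv_rev, mul_assoc, ← hvk, inv_mul_cancel_left]
    exact this ▸ hv

end

theorem stmt_6_general (G : Type*) [Group G] (V : Set G) (g : G)
    (hgV : g ∈ V)
    (hsub : (fun x => g * x) '' V ⊆ V)
    (hginv : g⁻¹ ∉ V)
    (hfin1 : (V \ (fun x => g * x) '' V).Finite)
    (hfin2 : (Vᶜ \ (fun x => g⁻¹ * x) '' Vᶜ).Finite)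
    (hai : ∀ x : G, (symmDiff ((fun v => v * x) '' V) V).Finite)
    (hai' : ∀ x : G, (symmDiff ((fun v => v * x) '' Vᶜ) Vᶜ).Finite) :
    ¬IsOfFinOrder g ∧ (Subgroup.zpowers g).FiniteIndex := by
  have hstep : ∀ y ∈ V, g * y ∈ V := fun y hy => hsub ⟨y, hy, rfl⟩
  have hstep' : ∀ y ∈ Vᶜ, g⁻¹ * y ∈ Vᶜ := fun y hy hmem => hy (by simpa using hstep _ hmem)
  have hpos : ∀ n : ℕ, g ^ (n + 1) ∈ V := pow_succ_mem_of_mul_mem hgV hstep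
  have hneg : ∀ n : ℕ, (g ^ (n + 1))⁻¹ ∉ V := fun n => by
    simpa [inv_pow] using pow_succ_mem_of_mul_mem (W := Vᶜ) hginv hstep' n
  have hord : ¬IsOfFinOrder g := not_isOfFinOrder_of_pow_succ_mem hpos hneg
  have hord' : ¬IsOfFinOrder g⁻¹ := isOfFinOrder_inv_iff.not.mpr hord
  have hg : g ∈ Subgroup.zpowers g := Subgroup.mem_zpowers g
  refine ⟨hord, Subgroup.finiteIndex_of_forall_exists_mul_mem (hfin1.union hfin2) fun x => ?_⟩
  by_cases hx : x ∈ V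
  · obtain ⟨k, hk⟩ := exists_inv_pow_mul_mem_diff hx
      (exists_inv_pow_mul_not_mem hord hneg (hai x⁻¹))
    exact ⟨_, inv_mem (pow_mem hg k), Or.inl hk⟩
  · obtain ⟨k, hk⟩ := exists_inv_pow_mul_mem_diff (W := Vᶜ) hx
      (exists_inv_pow_mul_not_mem hord' (by simpa [inv_pow] using hpos) (hai' x⁻¹))
    exact ⟨_, inv_mem (pow_mem (inv_mem hg) k), Or.inr hk⟩

/-- Key algebraic step in Hopf's theorem: if `V ⊆ G`, `g ∈ V`, `gV ⊆ V`, `g⁻¹ ∉ V`,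
`G \ V` is infinite, `V \ gV` and `(G\V) \ g⁻¹(G\V)` are finite, and both `V` and
`G \ V` are almost invariant, then `g` has infinite order and `⟨g⟩` has finite
index in `G`. -/
theorem stmt_6 (G : Type*) [Group G] (V : Set G) (g : G)
    (hgV : g ∈ V)
    (hsub : (fun x => g * x) '' V ⊆ V)
    (hginv : g⁻¹ ∉ V)
    (hcompl : Vᶜ.Infinite)
    (hfin1 : (V \ (fun x => g * x) '' V).Finite)
    (hfin2 : (Vᶜ \ (fun x => g⁻¹ * x) '' Vᶜ).Finite)
    (hai : ∀ x : G, (symmDiff ((fun v => v * x) '' V) V).Finite)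
    (hai' : ∀ x : G, (symmDiff ((fun v => v * x) '' Vᶜ) Vᶜ).Finite) :
    ¬IsOfFinOrder g ∧ (Subgroup.zpowers g).FiniteIndex :=
  stmt_6_general G V g hgV hsub hginv hfin1 hfin2 hai hai'
end

section
/- Let Γ be a group of automorphisms of ℤ (acting as isometries x ↦ ±x + k) that contains an orientation-reversing element g (i.e., g(x) = −x + c for some c) and a translation h of minimal positive translation distance among the translations in Γ, and suppose every element of Γ is either a translation or orientation-reversing. If Γ is generated by g and g·h, then the natural surjection ⟨g⟩ * ⟨gh⟩ → Γ from the free product of the cyclic groups generated by g and gh is injective, so Γ ≅ ℤ₂ * ℤ₂. -/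
/-!
Since `g` and `g * h` are reflections of `ℤ`, they are involutions, and their product
`g * (g * h) = h` is a nontrivial translation. In the free product of two groups of order two
with generators `α`, `β`, every element is `(α β) ^ n` or `(α β) ^ n α`, because conjugation
by `α` inverts `α β`. The first kind maps to a translation by `n m`, the second to a reflection,
so only the identity maps to the identity.
-/

open Monoid Coprod

section Involutions

variable {G : Type*} [Group G]

theorem mul_self_eq_one_of_forall_eq_one_or_eq {a : G} (hG : ∀ x : G, x = 1 ∨ x = a) :
    a * a = 1 := by
  rcases hG (a * a) with h | h
  · exact h
  · rw [mul_eq_left.mp h, one_mul]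

theorem mul_mul_zpow_eq_zpow_neg_mul {a b : G} (ha : a * a = 1) (hb : b * b = 1)
    (n : ℤ) : a * (a * b) ^ n = (a * b) ^ (-n) * a := by
  have hconj : SemiconjBy a (a * b) (b * a) := by
    rw [SemiconjBy, ← mul_assoc, ha, one_mul, mul_assoc, ha, mul_one]
  have hinv : (a * b)⁻¹ = b * a := by
    rw [mul_inv_rev, inv_eq_of_mul_eq_one_right ha, inv_eq_of_mul_eq_one_right hb]
  rw [zpow_neg, ← inv_zpow, hinv]
  exact (hconj.zpow_right n).eq

theorem Subgroup.zpowers_eq_one_or_eq_of_mul_self_eq_one {g : G} (hg : g * g = 1)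
    (x : Subgroup.zpowers g) : x = 1 ∨ x = ⟨g, Subgroup.mem_zpowers g⟩ := by
  obtain ⟨n, hn⟩ := Subgroup.mem_zpowers_iff.mp x.2
  have hn2 : g ^ n = g ^ (n % 2) := zpow_eq_zpow_emod' n (by rw [sq, hg])
  rcases Int.emod_two_eq n with h | h <;> rw [h] at hn2
  · exact Or.inl (Subtype.ext (by rw [← hn, hn2, zpow_zero]; rfl))
  · exact Or.inr (Subtype.ext (by rw [← hn, hn2, zpow_one]))

theorem Subgroup.nonempty_zpowers_mulEquiv_zmod_two {g : G} (hg : g * g = 1) (hg1 : g ≠ 1) :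
    Nonempty (Subgroup.zpowers g ≃* Multiplicative (ZMod 2)) := by
  have hcard : Nat.card (Subgroup.zpowers g) = 2 := by
    rw [Nat.card_zpowers]
    exact orderOf_eq_prime (by rw [sq, hg]) hg1
  have hcard2 : Nat.card (Multiplicative (ZMod 2)) = 2 := by
    rw [Nat.card_congr Multiplicative.toAdd, Nat.card_zmod]
  exact ⟨mulEquivOfPrimeCardEq hcard hcard2⟩

end Involutions

namespace Monoid.Coprod

variable {A B : Type*} [Group A] [Group B] {a : A} {b : B}

theorem exists_eq_zpow_or_eq_zpow_mul_inl (hA : ∀ x : A, x = 1 ∨ x = a)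
    (hB : ∀ y : B, y = 1 ∨ y = b) (w : A ∗ B) :
    ∃ n : ℤ, w = (inl a * inr b) ^ n ∨ w = (inl a * inr b) ^ n * inl a := by
  set α : A ∗ B := inl a
  set t : A ∗ B := α * inr b
  have hα : α * α = 1 := by rw [← map_mul, mul_self_eq_one_of_forall_eq_one_or_eq hA, map_one]
  have hβ : (inr b : A ∗ B) * inr b = 1 := by
    rw [← map_mul, mul_self_eq_one_of_forall_eq_one_or_eq hB, map_one]
  have hαt (n : ℤ) : α * t ^ n = t ^ (-n) * α := mul_mul_zpow_eq_zpow_neg_mul hα hβ n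
  have mul_α (w : A ∗ B) : (∃ n : ℤ, w = t ^ n ∨ w = t ^ n * α) →
      ∃ n : ℤ, α * w = t ^ n ∨ α * w = t ^ n * α := by
    rintro ⟨n, rfl | rfl⟩
    · exact ⟨-n, Or.inr (hαt n)⟩
    · exact ⟨-n, Or.inl (by rw [← mul_assoc, hαt, mul_assoc, hα, mul_one])⟩
  have mul_t (w : A ∗ B) : (∃ n : ℤ, w = t ^ n ∨ w = t ^ n * α) →
      ∃ n : ℤ, t * w = t ^ n ∨ t * w = t ^ n * α := by
    rintro ⟨n, rfl | rfl⟩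
    · exact ⟨n + 1, Or.inl (by rw [zpow_add_one, (Commute.self_zpow t n).eq])⟩
    · exact ⟨n + 1, Or.inr (by rw [zpow_add_one, ← mul_assoc, (Commute.self_zpow t n).eq])⟩
  induction w using induction_on' with
  | one => exact ⟨0, Or.inl (zpow_zero t).symm⟩
  | inl_mul x w ih =>
    rcases hA x with hx | hx <;> rw [hx]
    · simpa using ih
    · exact mul_α w ih
  | inr_mul y w ih =>
    rcases hB y with hy | hy <;> rw [hy]
    · simpa using ih
    · have hinr : (inr b : A ∗ B) = α * t := by rw [← mul_assoc, hα, one_mul]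
      rw [hinr, mul_assoc]
      exact mul_α _ (mul_t w ih)

theorem injective_of_not_isOfFinOrder {G : Type*} [Group G] (φ : A ∗ B →* G)
    (hA : ∀ x : A, x = 1 ∨ x = a) (hB : ∀ y : B, y = 1 ∨ y = b)
    (ht : ¬IsOfFinOrder (φ (inl a * inr b)))
    (hα : φ (inl a) ∉ Subgroup.zpowers (φ (inl a * inr b))) :
    Function.Injective φ := by
  rw [injective_iff_map_eq_one]
  intro w hw
  obtain ⟨n, rfl | rfl⟩ := exists_eq_zpow_or_eq_zpow_mul_inl hA hB w
  · rw [map_zpow] at hw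
    have hn : n = 0 := injective_zpow_iff_not_isOfFinOrder.mpr ht (by simpa using hw)
    rw [hn, zpow_zero]
  · rw [map_mul, map_zpow] at hw
    refine absurd (Subgroup.mem_zpowers_iff.mpr ⟨-n, ?_⟩) hα
    rw [zpow_neg, ← eq_inv_of_mul_eq_one_right hw]

end Monoid.Coprod

theorem mul_self_eq_one_of_apply_eq_neg_add {f : Equiv.Perm ℤ} {c : ℤ}
    (hf : ∀ x, f x = -x + c) : f * f = 1 := by
  ext x
  simp [hf]

theorem ne_one_of_apply_eq_neg_add {f : Equiv.Perm ℤ} {c : ℤ} (hf : ∀ x, f x = -x + c) :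
    f ≠ 1 := by
  intro hf1
  have h0 := hf 0
  have h1 := hf 1
  simp only [hf1, Equiv.Perm.one_apply] at h0 h1
  omega

theorem not_mem_zpowers_addRight_of_apply_eq_neg_add {f : Equiv.Perm ℤ} {c : ℤ}
    (hf : ∀ x, f x = -x + c) (m : ℤ) : f ∉ Subgroup.zpowers (Equiv.addRight m) := by
  rintro ⟨n, hn⟩
  have h0 := congrArg (· 0) hn
  have h1 := congrArg (· 1) hn
  simp only [Equiv.zsmul_addRight, Equiv.coe_addRight, hf] at h0 h1
  omega

theorem not_isOfFinOrder_addRight {m : ℤ} (hm : m ≠ 0) :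
    ¬IsOfFinOrder (Equiv.addRight m) := by
  refine injective_zpow_iff_not_isOfFinOrder.mp fun p q hpq ↦ ?_
  have h0 := congrArg (· 0) hpq
  simp only [Equiv.zsmul_addRight, Equiv.coe_addRight, zero_add, smul_eq_mul] at h0
  exact mul_right_cancel₀ hm h0

theorem stmt_10_general (Γ : Subgroup (Equiv.Perm ℤ))
    (g : Equiv.Perm ℤ) (c : ℤ) (hgc : ∀ x : ℤ, g x = -x + c)
    (h : Equiv.Perm ℤ) (m : ℤ) (hhm : ∀ x : ℤ, h x = x + m) (hm : 0 < |m|)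
    (hgen : Γ = Subgroup.closure {g, g * h}) :
    Function.Injective
      (Monoid.Coprod.lift (Subgroup.zpowers g).subtype (Subgroup.zpowers (g * h)).subtype) ∧
    Nonempty (Γ ≃* Monoid.Coprod (Multiplicative (ZMod 2)) (Multiplicative (ZMod 2))) := by
  obtain rfl : h = Equiv.addRight m := Equiv.ext hhm
  have hg2 := mul_self_eq_one_of_apply_eq_neg_add hgc
  have hghc : ∀ x, (g * Equiv.addRight m) x = -x + (c - m) := fun x ↦ by
    simp only [Equiv.Perm.mul_apply, Equiv.coe_addRight, hgc]; ring
  have hgh2 := mul_self_eq_one_of_apply_eq_neg_add hghc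
  have hprod : g * (g * Equiv.addRight m) = Equiv.addRight m := by rw [← mul_assoc, hg2, one_mul]
  set φ := lift (Subgroup.zpowers g).subtype (Subgroup.zpowers (g * Equiv.addRight m)).subtype
  have hinj : Function.Injective φ := injective_of_not_isOfFinOrder φ
    (Subgroup.zpowers_eq_one_or_eq_of_mul_self_eq_one hg2)
    (Subgroup.zpowers_eq_one_or_eq_of_mul_self_eq_one hgh2)
    (by simpa [φ, hprod] using not_isOfFinOrder_addRight (abs_pos.mp hm))
    (by simpa [φ, hprod] using not_mem_zpowers_addRight_of_apply_eq_neg_add hgc m)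
  refine ⟨hinj, ?_⟩
  have hrange : φ.range = Γ := by
    rw [range_lift, Subgroup.range_subtype, Subgroup.range_subtype, hgen,
      Subgroup.zpowers_eq_closure, Subgroup.zpowers_eq_closure, ← Subgroup.closure_union,
      Set.singleton_union]
  obtain ⟨eA⟩ := Subgroup.nonempty_zpowers_mulEquiv_zmod_two hg2
    (ne_one_of_apply_eq_neg_add hgc)
  obtain ⟨eB⟩ := Subgroup.nonempty_zpowers_mulEquiv_zmod_two hgh2
    (ne_one_of_apply_eq_neg_add hghc)
  exact ⟨(MulEquiv.subgroupCongr hrange).symm.trans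
    ((MonoidHom.ofInjective hinj).symm.trans (MulEquiv.coprodCongr eA eB))⟩

/-- Let `Γ` be a group of automorphisms of the simplicial line `ℤ` (each element a
translation or orientation-reversing), containing an orientation-reversing element `g`
and a translation `h` of minimal positive translation distance among translations of `Γ`,
and generated by `g` and `g·h`.  Then the natural map `⟨g⟩ ∗ ⟨gh⟩ → Γ` from the free
product is injective, so `Γ ≅ ℤ₂ ∗ ℤ₂`. -/
theorem stmt_10 (Γ : Subgroup (Equiv.Perm ℤ))
    (helts : ∀ f ∈ Γ, (∃ k : ℤ, ∀ x : ℤ, f x = x + k) ∨ (∃ c : ℤ, ∀ x : ℤ, f x = -x + c))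
    (g : Equiv.Perm ℤ) (hg : g ∈ Γ) (c : ℤ) (hgc : ∀ x : ℤ, g x = -x + c)
    (h : Equiv.Perm ℤ) (hh : h ∈ Γ) (m : ℤ) (hhm : ∀ x : ℤ, h x = x + m) (hm : 0 < |m|)
    (hmin : ∀ f ∈ Γ, ∀ m' : ℤ, (∀ x : ℤ, f x = x + m') → m' ≠ 0 → |m| ≤ |m'|)
    (hgen : Γ = Subgroup.closure {g, g * h}) :
    Function.Injective
      (Monoid.Coprod.lift (Subgroup.zpowers g).subtype (Subgroup.zpowers (g * h)).subtype) ∧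
    Nonempty (Γ ≃* Monoid.Coprod (Multiplicative (ZMod 2)) (Multiplicative (ZMod 2))) :=
  stmt_10_general Γ g c hgc h m hhm hm hgen
end
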